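/- Let Q be a standard Young tableau of staircase shape sc_n and w a word with EG(w) = Q and P(w) frozen. Then the weak descent set of w equals the descent set of Q: Des(w) = {i : w_i ≥ w_{i+1}} equals Des(Q) = {k : k+1 lies in a strictly lower row of Q than k}. -/

import Mathlib

/-- The adjacent transposition `s_a` (1-indexed letter `a`) acting on positions `Fin n`. -/
def adjT (n a : ℕ) : Equiv.Perm (Fin n) :=
  if h : 1 ≤ a ∧ a < n then Equiv.swap ⟨a - 1, by omega⟩ ⟨a, h.2⟩ else 1

/-- The permutation `s_{w_1} ∘ s_{w_2} ∘ ⋯ ∘ s_{w_m}` of a word, transpositions acting on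
positions composed from the left (`s_{w_1}` applied first to the identity). -/
def permOfWord (n : ℕ) (w : List ℕ) : Equiv.Perm (Fin n) :=
  (w.map (adjT n)).prod

/-- The set of inversions of a permutation. -/
def invSet {n : ℕ} (σ : Equiv.Perm (Fin n)) : Set (Fin n × Fin n) :=
  {p | p.1 < p.2 ∧ σ p.2 < σ p.1}

/-- The number of inversions. -/
noncomputable def invNum {n : ℕ} (σ : Equiv.Perm (Fin n)) : ℕ := (invSet σ).ncard

/-- `w` is a reduced word for `σ`: letters in `[n-1]`, the product of the corresponding
adjacent transpositions is `σ`, and the length is `inv σ`. -/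
def IsReducedWord (n : ℕ) (σ : Equiv.Perm (Fin n)) (w : List ℕ) : Prop :=
  (∀ a ∈ w, 1 ≤ a ∧ a < n) ∧ permOfWord n w = σ ∧ w.length = invNum σ

/-- `σ` avoids the pattern 132. -/
def Avoids132 {n : ℕ} (σ : Equiv.Perm (Fin n)) : Prop :=
  ¬ ∃ i1 i2 i3 : Fin n, i1 < i2 ∧ i2 < i3 ∧ σ i1 < σ i3 ∧ σ i3 < σ i2

/-- `σ` avoids the pattern 312. -/
def Avoids312 {n : ℕ} (σ : Equiv.Perm (Fin n)) : Prop :=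
  ¬ ∃ i1 i2 i3 : Fin n, i1 < i2 ∧ i2 < i3 ∧ σ i2 < σ i3 ∧ σ i3 < σ i1

/-- The Rothe diagram of `σ` (permutation matrix with 1s at `(σ i, i)`, 0-indexed):
cells strictly north of the 1 in their column and strictly west of the 1 in their row. -/
def rothe {n : ℕ} (σ : Equiv.Perm (Fin n)) : Set (Fin n × Fin n) :=
  {p | p.1 < σ p.2 ∧ p.2 < σ.symm p.1}

/-- Two cells are adjacent if they share an edge. -/
def adjCell {n : ℕ} (p q : Fin n × Fin n) : Prop :=
  (p.1 = q.1 ∧ ((p.2 : ℕ) + 1 = q.2 ∨ (q.2 : ℕ) + 1 = p.2)) ∨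
  (p.2 = q.2 ∧ ((p.1 : ℕ) + 1 = q.1 ∨ (q.1 : ℕ) + 1 = p.1))

/-- The connected component of the Rothe diagram containing the (0-indexed) cell `(0,0)`,
empty if `(0,0)` is not in the diagram. -/
def comp11 {n : ℕ} (σ : Equiv.Perm (Fin n)) : Set (Fin n × Fin n) :=
  {p | ∃ h0 : 0 < n,
    Relation.ReflTransGen (fun a b => a ∈ rothe σ ∧ b ∈ rothe σ ∧ adjCell a b)
      (⟨⟨0, h0⟩, ⟨0, h0⟩⟩) p ∧
    p ∈ rothe σ ∧ ((⟨⟨0, h0⟩, ⟨0, h0⟩⟩ : Fin n × Fin n)) ∈ rothe σ}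

/-- Edelman–Greene insertion of `x` into a single (strictly increasing) row:
returns the new row and the optional entry bumped into the next row. -/
def insRow (x : ℕ) : List ℕ → List ℕ × Option ℕ
  | [] => ([x], none)
  | z :: zs =>
    if z < x then
      let r := insRow x zs
      (z :: r.1, r.2)
    else if z = x then (z :: zs, some (z + 1))
    else (x :: zs, some z)

/-- Edelman–Greene insertion of `x` into a tableau (list of rows). -/
def insTab (x : ℕ) : List (List ℕ) → List (List ℕ)
  | [] => [[x]]
  | r :: rs =>
    let p := insRow x r
    match p.2 with
    | none => p.1 :: rs
    | some y => p.1 :: insTab y rs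

/-- The Edelman–Greene insertion tableau `P(w)`. -/
def Ptab (w : List ℕ) : List (List ℕ) := w.foldl (fun t x => insTab x t) []

/-- Add the label `k` to the recording tableau `q` at the unique new cell of shape `p`. -/
def recordCell (k : ℕ) : List (List ℕ) → List (List ℕ) → List (List ℕ)
  | _, [] => []
  | [], _ :: _ => [[k]]
  | q :: qs, p :: ps =>
    if q.length < p.length then (q ++ [k]) :: qs else q :: recordCell k qs ps

/-- The Edelman–Greene recording tableau `Q(w) = EG(w)`. -/
def Qtab (w : List ℕ) : List (List ℕ) :=
  (w.foldl (fun pq x =>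
      let P' := insTab x pq.1
      (P', recordCell (pq.2.flatten.length + 1) pq.2 P'))
    (([], []) : List (List ℕ) × List (List ℕ))).2

/-- A tableau is frozen if the cell in (0-indexed) row `i`, column `j` contains `i + j + 1`. -/
def Frozen (P : List (List ℕ)) : Prop :=
  ∀ i j, i < P.length → j < (P.getD i []).length → (P.getD i []).getD j 0 = i + j + 1

/-- All rows strictly increasing. -/
def RowStrict (P : List (List ℕ)) : Prop := ∀ r ∈ P, List.Pairwise (· < ·) r

/-- All columns strictly increasing. -/
def ColStrict (P : List (List ℕ)) : Prop :=
  ∀ i j, i + 1 < P.length → j < (P.getD (i + 1) []).length →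
    (P.getD i []).getD j 0 < (P.getD (i + 1) []).getD j 0

/-- Valid Young-diagram shape: nonempty rows of weakly decreasing lengths. -/
def TabShape (P : List (List ℕ)) : Prop :=
  (∀ r ∈ P, r ≠ []) ∧ ∀ i, i + 1 < P.length → (P.getD (i + 1) []).length ≤ (P.getD i []).length

/-- The reading word: rows left to right, from the bottom row up. -/
def readingWord (P : List (List ℕ)) : List ℕ := P.reverse.flatten

/-- A standard Young tableau: valid shape, strictly increasing rows and columns, and the
entries are `1, …, N` each exactly once. -/
def IsStandard (Q : List (List ℕ)) : Prop :=
  TabShape Q ∧ RowStrict Q ∧ ColStrict Q ∧ Q.flatten.Perm (List.range' 1 Q.flatten.length)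

/-- `Q` has the staircase shape `sc_n = (n-1, n-2, …, 1)`. -/
def StaircaseShape (n : ℕ) (Q : List (List ℕ)) : Prop :=
  Q.length = n - 1 ∧ ∀ i, i < n - 1 → (Q.getD i []).length = n - 1 - i

/-- A sorting network: a reduced word of the reverse permutation in `S_n`. -/
def IsSortingNetwork (n : ℕ) (w : List ℕ) : Prop :=
  IsReducedWord n Fin.revPerm w

/-- Every intermediate permutation of the word avoids 132. -/
def Avoiding132 (n : ℕ) (w : List ℕ) : Prop :=
  ∀ k, k ≤ w.length → Avoids132 (permOfWord n (w.take k))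

/-- Every intermediate permutation of the word avoids 312. -/
def Avoiding312 (n : ℕ) (w : List ℕ) : Prop :=
  ∀ k, k ≤ w.length → Avoids312 (permOfWord n (w.take k))

/-- `c` is the column word of `Q`: its `k`-th letter (1-indexed) is the (1-indexed) column
of the entry `k` in `Q`. -/
def IsColumnWord (Q : List (List ℕ)) (c : List ℕ) : Prop :=
  c.length = Q.flatten.length ∧
  ∀ k, k < c.length → ∃ i j, i < Q.length ∧ j < (Q.getD i []).length ∧
    (Q.getD i []).getD j 0 = k + 1 ∧ c.getD k 0 = j + 1

/-- All anti-diagonals of `Q` increase downwards: `Q_{i,j} > Q_{i-1,j+1}` (1-indexed). -/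
def AntiDiagDown (Q : List (List ℕ)) : Prop :=
  ∀ i j, i + 1 < Q.length → j < (Q.getD (i + 1) []).length → j + 1 < (Q.getD i []).length →
    (Q.getD i []).getD (j + 1) 0 < (Q.getD (i + 1) []).getD j 0

/-!
Edelman–Greene insertion obeys a row bumping lemma: if `x` and then `y` are inserted, the
cell created by `y` lies strictly below the one created by `x` when `y ≤ x`, and weakly above
it when `x < y`. Row by row, the two bumping paths compare the same way (`y ≤ x` forces the
bumped values to satisfy `v₂ ≤ v₁`, `x < y` forces `v₁ < v₂`), so the path of `y` outlasts
that of `x` exactly in the first case. Since `Q(w)` records the cell created by the `k`-th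
letter with the label `k`, the weak descents of `w` are the descents of `Q(w)`.
-/

namespace EdelmanGreene

section rows

variable {α : Type*} {q : List (List α)} {i j : ℕ} {a : α}

theorem mem_flatten_of_mem_getD (h : a ∈ q.getD i []) : a ∈ q.flatten := by
  rcases hq : q[i]? with _ | r
  · simp [List.getD_eq_getElem?_getD, hq] at h
  · simp only [List.getD_eq_getElem?_getD, hq, Option.getD_some] at h
    exact List.mem_flatten.mpr ⟨r, List.mem_of_getElem? hq, h⟩

theorem eq_of_mem_getD_of_mem_getD (hq : q.flatten.Nodup) (hi : a ∈ q.getD i [])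
    (hj : a ∈ q.getD j []) : i = j := by
  induction q generalizing i j with
  | nil => simp at hi
  | cons r rs ih =>
    rw [List.flatten_cons, List.nodup_append] at hq
    cases i <;> cases j
    · rfl
    · exact absurd rfl
        (hq.2.2 a (by simpa using hi) a (mem_flatten_of_mem_getD (by simpa using hj)))
    · exact absurd rfl
        (hq.2.2 a (by simpa using hj) a (mem_flatten_of_mem_getD (by simpa using hi)))
    · simpa using ih hq.2.1 (by simpa using hi) (by simpa using hj)

theorem take_succ_eq_append_getD {w : List α} (d : α) (hj : j < w.length) :
    w.take (j + 1) = w.take j ++ [w.getD j d] := by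
  rw [List.take_succ_eq_append_getElem hj, List.getD_eq_getElem w d hj]

end rows

section insRow

variable {x y v : ℕ} {l : List ℕ}

theorem insRow_snd_eq_none_iff : (insRow x l).2 = none ↔ ∀ z ∈ l, z < x := by
  induction l with
  | nil => simp [insRow]
  | cons z zs ih =>
    by_cases h1 : z < x
    · simp [insRow, h1, ih]
    · by_cases h2 : z = x <;> simp [insRow, h1, h2]

theorem insRow_of_forall_lt (h : ∀ z ∈ l, z < x) : insRow x l = (l ++ [x], none) := by
  induction l with
  | nil => rfl
  | cons z zs ih =>
    simp only [List.mem_cons, forall_eq_or_imp] at h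
    simp [insRow, h.1, ih h.2]

theorem insRow_fst_of_snd_eq_none (h : (insRow x l).2 = none) : (insRow x l).1 = l ++ [x] := by
  rw [insRow_of_forall_lt (insRow_snd_eq_none_iff.mp h)]

/-- The bumped value is `x + 1` when `x` is in the row, and otherwise the smallest entry
larger than `x`. -/
theorem insRow_bumped_spec (h : (insRow x l).2 = some v) : x < v ∧ ∃ u ∈ l, u ≤ v := by
  induction l with
  | nil => simp [insRow] at h
  | cons z zs ih =>
    by_cases h1 : z < x
    · simp only [insRow, h1, if_true] at h
      obtain ⟨hxv, u, hu, huv⟩ := ih h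
      exact ⟨hxv, u, List.mem_cons_of_mem _ hu, huv⟩
    · by_cases h2 : z = x
      · subst h2
        simp only [insRow, h1, if_false, if_true, Option.some.injEq] at h
        exact ⟨by omega, z, List.mem_cons_self, by omega⟩
      · simp only [insRow, h1, h2, if_false, Option.some.injEq] at h
        exact ⟨by omega, z, List.mem_cons_self, h.le⟩

theorem mem_insRow_fst {u : ℕ} (h : u ∈ (insRow x l).1) : u = x ∨ u ∈ l := by
  induction l with
  | nil => simpa [insRow] using h
  | cons z zs ih =>
    by_cases h1 : z < x
    · simp only [insRow, h1, if_true, List.mem_cons] at h ⊢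
      rcases h with h | h
      · exact Or.inr (Or.inl h)
      · rcases ih h with h | h <;> simp [h]
    · by_cases h2 : z = x
      · subst h2
        simp only [insRow, h1, if_false, if_true] at h
        exact Or.inr h
      · simp only [insRow, h1, h2, if_false, List.mem_cons] at h ⊢
        tauto

theorem insRow_fst_sorted (hl : l.Pairwise (· < ·)) : (insRow x l).1.Pairwise (· < ·) := by
  induction l with
  | nil => simp [insRow]
  | cons z zs ih =>
    rw [List.pairwise_cons] at hl
    by_cases h1 : z < x
    · simp only [insRow, h1, if_true, List.pairwise_cons]
      refine ⟨fun b hb => ?_, ih hl.2⟩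
      rcases mem_insRow_fst hb with rfl | hb
      exacts [h1, hl.1 b hb]
    · by_cases h2 : z = x
      · simpa [insRow, h1, h2] using hl
      · simp only [insRow, h1, h2, if_false, List.pairwise_cons]
        exact ⟨fun b hb => by have := hl.1 b hb; omega, hl.2⟩

theorem length_insRow_fst_of_snd_eq_some (h : (insRow x l).2 = some v) :
    (insRow x l).1.length = l.length := by
  induction l with
  | nil => simp [insRow] at h
  | cons z zs ih =>
    by_cases h1 : z < x
    · simp only [insRow, h1, if_true] at h ⊢
      simp [ih h]
    · by_cases h2 : z = x <;> simp [insRow, h1, h2]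

theorem insRow_insRow_of_le {v₁ : ℕ} (hl : l.Pairwise (· < ·)) (h : (insRow x l).2 = some v₁)
    (hyx : y ≤ x) : ∃ v₂, (insRow y (insRow x l).1).2 = some v₂ ∧ v₂ ≤ v₁ := by
  induction l with
  | nil => simp [insRow] at h
  | cons z zs ih =>
    rw [List.pairwise_cons] at hl
    by_cases h1 : z < x
    · simp only [insRow, h1, if_true] at h ⊢
      have hzv : z < v₁ := by
        obtain ⟨-, u, hu, huv⟩ := insRow_bumped_spec h
        exact (hl.1 u hu).trans_le huv
      by_cases hy : z < y
      · simpa [insRow, hy] using ih hl.2 h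
      · by_cases hy2 : z = y <;> simp [hy, hy2] <;> omega
    · by_cases h2 : z = x
      · subst h2
        simp only [insRow, h1, if_false, if_true, Option.some.injEq] at h ⊢
        by_cases hy2 : z = y <;> simp [show ¬ z < y by omega, hy2] <;> omega
      · simp only [insRow, h1, h2, if_false, Option.some.injEq] at h ⊢
        by_cases hy2 : x = y <;> simp [show ¬ x < y by omega, hy2] <;> omega

theorem insRow_insRow_of_lt {v₁ v₂ : ℕ} (hl : l.Pairwise (· < ·)) (h : (insRow x l).2 = some v₁)
    (hxy : x < y) (h' : (insRow y (insRow x l).1).2 = some v₂) : v₁ < v₂ := by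
  induction l with
  | nil => simp [insRow] at h
  | cons z zs ih =>
    rw [List.pairwise_cons] at hl
    by_cases h1 : z < x
    · simp only [insRow, h1, if_true, show z < y by omega] at h h'
      exact ih hl.2 h h'
    · by_cases h2 : z = x
      · subst h2
        simp only [insRow, h1, if_false, if_true, Option.some.injEq, hxy] at h h'
        have := (insRow_bumped_spec h').1
        omega
      · simp only [insRow, h1, h2, if_false, if_true, Option.some.injEq, hxy] at h h'
        obtain ⟨-, u, hu, huv⟩ := insRow_bumped_spec h'
        have := hl.1 u hu
        omega

end insRow

/-- The row (0-indexed) of the cell that `insTab x P` adds to the shape of `P`. -/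
def bumpRow (x : ℕ) : List (List ℕ) → ℕ
  | [] => 0
  | r :: rs =>
    match (insRow x r).2 with
    | none => 0
    | some y => bumpRow y rs + 1

section insTab

variable {x y : ℕ} {P : List (List ℕ)}

theorem bumpRow_le_length : bumpRow x P ≤ P.length := by
  induction P generalizing x with
  | nil => simp [bumpRow]
  | cons r rs ih =>
    rw [bumpRow]
    split
    · simp
    · simpa using ih

theorem rowStrict_insTab (hP : RowStrict P) : RowStrict (insTab x P) := by
  induction P generalizing x with
  | nil => simp [RowStrict, insTab]
  | cons r rs ih =>
    simp only [RowStrict, List.mem_cons, forall_eq_or_imp] at hP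
    have hr := insRow_fst_sorted (x := x) hP.1
    rw [insTab]
    split <;> simp only [RowStrict, List.mem_cons, forall_eq_or_imp]
    exacts [⟨hr, hP.2⟩, ⟨hr, ih hP.2⟩]

theorem bumpRow_lt_bumpRow_insTab (hP : RowStrict P) (hyx : y ≤ x) :
    bumpRow x P < bumpRow y (insTab x P) := by
  induction P generalizing x y with
  | nil =>
    obtain ⟨v, hv⟩ : ∃ v, (insRow y [x]).2 = some v := by
      rcases hyx.eq_or_lt with rfl | hlt
      · simp [insRow]
      · simp [insRow, hyx.not_gt, hlt.ne']
    simp [bumpRow, insTab, hv]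
  | cons r rs ih =>
    simp only [RowStrict, List.mem_cons, forall_eq_or_imp] at hP
    rw [insTab, bumpRow]
    rcases h : (insRow x r).2 with _ | v₁
    · obtain ⟨v₂, hv₂⟩ : ∃ v₂, (insRow y (insRow x r).1).2 = some v₂ := by
        refine Option.ne_none_iff_exists'.mp fun hn => ?_
        have := insRow_snd_eq_none_iff.mp hn x (by simp [insRow_fst_of_snd_eq_none h])
        omega
      simp only [bumpRow, hv₂]
      omega
    · obtain ⟨v₂, hv₂, hle⟩ := insRow_insRow_of_le hP.1 h hyx
      simp only [bumpRow, hv₂]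
      exact Nat.succ_lt_succ (ih hP.2 hle)

theorem bumpRow_insTab_le_bumpRow (hP : RowStrict P) (hxy : x < y) :
    bumpRow y (insTab x P) ≤ bumpRow x P := by
  induction P generalizing x y with
  | nil => simp [bumpRow, insTab, insRow, hxy]
  | cons r rs ih =>
    simp only [RowStrict, List.mem_cons, forall_eq_or_imp] at hP
    rw [insTab, bumpRow]
    rcases h : (insRow x r).2 with _ | v₁
    · have hall := insRow_snd_eq_none_iff.mp h
      have : (insRow y (insRow x r).1).2 = none := by
        refine insRow_snd_eq_none_iff.mpr fun z hz => ?_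
        rw [insRow_fst_of_snd_eq_none h, List.mem_append, List.mem_singleton] at hz
        rcases hz with hz | rfl
        exacts [(hall z hz).trans hxy, hxy]
      simp [bumpRow, this]
    · rcases h₂ : (insRow y (insRow x r).1).2 with _ | v₂
      · simp [bumpRow, h₂]
      · simp only [bumpRow, h₂]
        exact Nat.succ_le_succ (ih hP.2 (insRow_insRow_of_lt hP.1 h hxy h₂))

end insTab

def appendToRow (m : ℕ) : List (List ℕ) → ℕ → List (List ℕ)
  | [], _ => [[m]]
  | r :: rs, 0 => (r ++ [m]) :: rs
  | r :: rs, b + 1 => r :: appendToRow m rs b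

section recording

variable {m x : ℕ} {q p : List (List ℕ)}

theorem length_flatten_appendToRow (b : ℕ) :
    (appendToRow m q b).flatten.length = q.flatten.length + 1 := by
  induction q generalizing b with
  | nil => simp [appendToRow]
  | cons r rs ih =>
    cases b with
    | zero => simp [appendToRow]; omega
    | succ b => simp [appendToRow, ih]; omega

theorem mem_appendToRow_of_mem {k i : ℕ} (b : ℕ) (h : k ∈ q.getD i []) :
    k ∈ (appendToRow m q b).getD i [] := by
  induction q generalizing i b with
  | nil => simp at h
  | cons r rs ih =>
    cases i <;> cases b <;> simp_all [appendToRow]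

theorem mem_appendToRow {b : ℕ} (hb : b ≤ q.length) : m ∈ (appendToRow m q b).getD b [] := by
  induction q generalizing b with
  | nil => simp_all [appendToRow]
  | cons r rs ih =>
    cases b with
    | zero => simp [appendToRow]
    | succ b => simpa [appendToRow] using ih (by simpa using hb)

theorem recordCell_insTab (hq : q.map List.length = p.map List.length) :
    recordCell m q (insTab x p) = appendToRow m q (bumpRow x p) := by
  induction p generalizing q x with
  | nil =>
    obtain rfl : q = [] := List.map_eq_nil_iff.mp hq
    rfl
  | cons r rs ih =>
    obtain ⟨q₀, qs, rfl⟩ :=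
      List.exists_cons_of_length_eq_add_one (by simpa using congrArg List.length hq)
    simp only [List.map_cons, List.cons.injEq] at hq
    rw [insTab, bumpRow]
    rcases h : (insRow x r).2 with _ | v
    · simp [recordCell, appendToRow, insRow_fst_of_snd_eq_none h, hq.1]
    · simp [recordCell, appendToRow, length_insRow_fst_of_snd_eq_some h, hq.1, ih hq.2]

theorem map_length_recordCell_insTab (hq : q.map List.length = p.map List.length) :
    (recordCell m q (insTab x p)).map List.length = (insTab x p).map List.length := by
  induction p generalizing q x with
  | nil =>
    obtain rfl : q = [] := List.map_eq_nil_iff.mp hq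
    rfl
  | cons r rs ih =>
    obtain ⟨q₀, qs, rfl⟩ :=
      List.exists_cons_of_length_eq_add_one (by simpa using congrArg List.length hq)
    simp only [List.map_cons, List.cons.injEq] at hq
    rw [insTab]
    rcases h : (insRow x r).2 with _ | v
    · simp [recordCell, insRow_fst_of_snd_eq_none h, hq.1, hq.2]
    · simp [recordCell, length_insRow_fst_of_snd_eq_some h, hq.1, ih hq.2]

end recording

theorem Ptab_append_singleton (u : List ℕ) (x : ℕ) : Ptab (u ++ [x]) = insTab x (Ptab u) := by
  simp [Ptab, List.foldl_append]

theorem rowStrict_Ptab (u : List ℕ) : RowStrict (Ptab u) := by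
  induction u using List.reverseRecOn with
  | nil => simp [Ptab, RowStrict]
  | append_singleton u x ih => rw [Ptab_append_singleton]; exact rowStrict_insTab ih

theorem Qtab_append_singleton_eq_recordCell (u : List ℕ) (x : ℕ) :
    Qtab (u ++ [x]) = recordCell ((Qtab u).flatten.length + 1) (Qtab u) (insTab x (Ptab u)) := by
  have hP : Ptab u = (u.foldl (fun pq x =>
      let P' := insTab x pq.1
      (P', recordCell (pq.2.flatten.length + 1) pq.2 P')) ([], [])).1 :=
    List.foldl_hom (g₂ := fun t x => insTab x t) (init := ([], [])) Prod.fst fun _ _ => rfl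
  simp only [Qtab, List.foldl_append, List.foldl_cons, List.foldl_nil, hP]

theorem map_length_Qtab (u : List ℕ) : (Qtab u).map List.length = (Ptab u).map List.length := by
  induction u using List.reverseRecOn with
  | nil => rfl
  | append_singleton u x ih =>
    rw [Qtab_append_singleton_eq_recordCell, Ptab_append_singleton,
      map_length_recordCell_insTab ih]

theorem length_flatten_Qtab (u : List ℕ) : (Qtab u).flatten.length = u.length := by
  induction u using List.reverseRecOn with
  | nil => rfl
  | append_singleton u x ih =>
    rw [Qtab_append_singleton_eq_recordCell, recordCell_insTab (map_length_Qtab u),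
      length_flatten_appendToRow, ih, List.length_append, List.length_singleton]

theorem Qtab_append_singleton (u : List ℕ) (x : ℕ) :
    Qtab (u ++ [x]) = appendToRow (u.length + 1) (Qtab u) (bumpRow x (Ptab u)) := by
  rw [Qtab_append_singleton_eq_recordCell, recordCell_insTab (map_length_Qtab u),
    length_flatten_Qtab]

theorem mem_Qtab_append_of_mem {u : List ℕ} {i k : ℕ} (v : List ℕ)
    (h : k ∈ (Qtab u).getD i []) :
    k ∈ (Qtab (u ++ v)).getD i [] := by
  induction v using List.reverseRecOn with
  | nil => simpa using h
  | append_singleton v x ih =>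
    rw [← List.append_assoc, Qtab_append_singleton]
    exact mem_appendToRow_of_mem _ ih

/-- The row of `Qtab w` that receives the label `j + 1`. -/
def cellRow (w : List ℕ) (j : ℕ) : ℕ := bumpRow (w.getD j 0) (Ptab (w.take j))

theorem mem_Qtab_cellRow {w : List ℕ} {j : ℕ} (hj : j < w.length) :
    j + 1 ∈ (Qtab w).getD (cellRow w j) [] := by
  have hlen : (w.take j).length = j := List.length_take_of_le hj.le
  have hrow : cellRow w j ≤ (Qtab (w.take j)).length := by
    have hshape := congrArg List.length (map_length_Qtab (w.take j))
    rw [List.length_map, List.length_map] at hshape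
    exact hshape ▸ bumpRow_le_length
  have hmem : j + 1 ∈ (Qtab (w.take (j + 1))).getD (cellRow w j) [] := by
    rw [take_succ_eq_append_getD 0 hj, Qtab_append_singleton, hlen]
    exact mem_appendToRow hrow
  simpa using mem_Qtab_append_of_mem (w.drop (j + 1)) hmem

theorem cellRow_lt_cellRow_succ_iff {w : List ℕ} {j : ℕ} (hj : j + 1 < w.length) :
    cellRow w j < cellRow w (j + 1) ↔ w.getD (j + 1) 0 ≤ w.getD j 0 := by
  rw [cellRow, cellRow, take_succ_eq_append_getD 0 (by omega), Ptab_append_singleton]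
  refine ⟨fun h => ?_, bumpRow_lt_bumpRow_insTab (rowStrict_Ptab _)⟩
  by_contra hlt
  have := bumpRow_insTab_le_bumpRow (rowStrict_Ptab (w.take j)) (not_le.mp hlt)
  omega

end EdelmanGreene

open EdelmanGreene

theorem descents_eq_general (Q : List (List ℕ)) (w : List ℕ)
    (hQ : IsStandard Q)
    (hEG : Qtab w = Q) :
    {i : ℕ | 1 ≤ i ∧ i < w.length ∧ w.getD i 0 ≤ w.getD (i - 1) 0}
      = {k : ℕ | ∃ i i' : ℕ, i < i' ∧ k ∈ Q.getD i [] ∧ k + 1 ∈ Q.getD i' []} := by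
  subst hEG
  have hlabels := hQ.2.2.2
  rw [length_flatten_Qtab] at hlabels
  have hbound {i k : ℕ} (h : k ∈ (Qtab w).getD i []) : 1 ≤ k ∧ k < 1 + w.length :=
    List.mem_range'_1.mp (hlabels.mem_iff.mp (mem_flatten_of_mem_getD h))
  have hrow {i j : ℕ} (hj : j < w.length) (h : j + 1 ∈ (Qtab w).getD i []) : i = cellRow w j :=
    eq_of_mem_getD_of_mem_getD (hlabels.nodup_iff.mpr List.nodup_range') h (mem_Qtab_cellRow hj)
  ext k
  constructor
  · rintro ⟨hk1, hk2, hk3⟩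
    obtain ⟨j, rfl⟩ := Nat.exists_eq_add_of_le' hk1
    rw [Nat.add_sub_cancel] at hk3
    exact ⟨_, _, (cellRow_lt_cellRow_succ_iff hk2).mpr hk3, mem_Qtab_cellRow (by omega),
      mem_Qtab_cellRow hk2⟩
  · rintro ⟨i, i', hii', hk, hk'⟩
    obtain ⟨hk1, -⟩ := hbound hk
    obtain ⟨-, hk2⟩ := hbound hk'
    obtain ⟨j, rfl⟩ := Nat.exists_eq_add_of_le' hk1
    refine ⟨hk1, by omega, ?_⟩
    rw [Nat.add_sub_cancel, ← cellRow_lt_cellRow_succ_iff (by omega), ← hrow (by omega) hk,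
      ← hrow (by omega) hk']
    exact hii'

/-- for a staircase standard Young tableau `Q` and any word `w` with
`EG(w) = Q` and `P(w)` frozen, the set of (1-indexed) weak descents of `w` equals the
descent set of `Q`. -/
theorem descents_eq (n : ℕ) (Q : List (List ℕ)) (w : List ℕ)
    (hQ : IsStandard Q) (hsc : StaircaseShape n Q)
    (hEG : Qtab w = Q) (hfr : Frozen (Ptab w)) :
    {i : ℕ | 1 ≤ i ∧ i < w.length ∧ w.getD i 0 ≤ w.getD (i - 1) 0}
      = {k : ℕ | ∃ i i' : ℕ, i < i' ∧ k ∈ Q.getD i [] ∧ k + 1 ∈ Q.getD i' []} :=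
  descents_eq_general Q w hQ hEG
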